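/- arXiv:2507.15415 — 3 statements merged into one kernel-verified Lean document; each statement's English description precedes it below -/
import Mathlib

section
/- Every permutation of a finite set can be written as a composition of two permutations, each of which is an involution (i.e., a product of disjoint transpositions). -/
/-!
Fix a base point `b` in every cycle of `σ`. The reflection `σ ^ i b ↦ σ ^ (-i) b` is well defined,
because `σ ^ i b = σ ^ j b` implies `σ ^ (-i) b = σ ^ (-j) b`, and it is an involution `a`.
Then `a ∘ σ` sends `σ ^ i b` to `σ ^ (-1 - i) b`, so it is an involution as well, and
`σ = a ∘ (a ∘ σ)`.
-/

namespace Equiv.Perm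

variable {α : Type*} (σ : Perm α)

theorem zpow_neg_apply_eq_of_zpow_apply_eq {i j : ℤ} {x : α} (h : (σ ^ i) x = (σ ^ j) x) :
    (σ ^ (-i)) x = (σ ^ (-j)) x := by
  have := congrArg (σ ^ (-i - j)) h
  simp only [← mul_apply, ← zpow_add] at this
  rwa [show -i - j + i = -j by ring, show -i - j + j = -i by ring, eq_comm] at this

noncomputable def cycleBase (x : α) : α :=
  (Quotient.mk (SameCycle.setoid σ) x).out

theorem SameCycle.cycleBase_eq {σ : Perm α} {x y : α} (h : σ.SameCycle x y) :
    σ.cycleBase x = σ.cycleBase y :=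
  congrArg Quotient.out (Quotient.sound h)

noncomputable def cycleIndex (x : α) : ℤ :=
  (Quotient.mk_out (s := SameCycle.setoid σ) x).choose

theorem zpow_cycleIndex_apply_cycleBase (x : α) : (σ ^ σ.cycleIndex x) (σ.cycleBase x) = x :=
  (Quotient.mk_out (s := SameCycle.setoid σ) x).choose_spec

theorem sameCycle_cycleBase (x : α) : σ.SameCycle (σ.cycleBase x) x :=
  ⟨_, σ.zpow_cycleIndex_apply_cycleBase x⟩

noncomputable def cycleReflection (x : α) : α :=
  (σ ^ (-σ.cycleIndex x)) (σ.cycleBase x)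

theorem cycleReflection_zpow_apply_cycleBase (i : ℤ) (x : α) :
    σ.cycleReflection ((σ ^ i) (σ.cycleBase x)) = (σ ^ (-i)) (σ.cycleBase x) := by
  have hbase : σ.cycleBase ((σ ^ i) (σ.cycleBase x)) = σ.cycleBase x :=
    SameCycle.cycleBase_eq (sameCycle_zpow_left.2 (σ.sameCycle_cycleBase x))
  have hindex := σ.zpow_cycleIndex_apply_cycleBase ((σ ^ i) (σ.cycleBase x))
  rw [hbase] at hindex
  rw [cycleReflection, hbase, σ.zpow_neg_apply_eq_of_zpow_apply_eq hindex]

theorem involutive_cycleReflection : Function.Involutive σ.cycleReflection := fun x =>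
  calc σ.cycleReflection (σ.cycleReflection x)
      = (σ ^ (- -σ.cycleIndex x)) (σ.cycleBase x) := cycleReflection_zpow_apply_cycleBase ..
    _ = x := by rw [neg_neg, zpow_cycleIndex_apply_cycleBase]

theorem involutive_cycleReflection_comp : Function.Involutive (σ.cycleReflection ∘ σ) := by
  have step (i : ℤ) (x : α) :
      σ.cycleReflection (σ ((σ ^ i) (σ.cycleBase x))) = (σ ^ (-(1 + i))) (σ.cycleBase x) := by
    rw [← mul_apply, ← zpow_one_add, cycleReflection_zpow_apply_cycleBase]
  intro x
  calc σ.cycleReflection (σ (σ.cycleReflection (σ x)))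
      = σ.cycleReflection (σ (σ.cycleReflection (σ ((σ ^ σ.cycleIndex x) (σ.cycleBase x))))) := by
        rw [zpow_cycleIndex_apply_cycleBase]
    _ = x := by
        rw [step, step, show -(1 + -(1 + σ.cycleIndex x)) = σ.cycleIndex x by omega,
          zpow_cycleIndex_apply_cycleBase]

end Equiv.Perm

theorem perm_eq_comp_two_involutions_general {α : Type*}
    (σ : Equiv.Perm α) :
    ∃ a b : Equiv.Perm α, a * a = 1 ∧ b * b = 1 ∧ σ = a * b := by
  refine ⟨σ.involutive_cycleReflection.toPerm, σ.involutive_cycleReflection_comp.toPerm,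
    ?_, ?_, ?_⟩ <;> ext x
  · exact σ.involutive_cycleReflection x
  · exact σ.involutive_cycleReflection_comp x
  · exact (σ.involutive_cycleReflection (σ x)).symm

/-- Every permutation of a finite set is a composition of two involutions
(products of disjoint transpositions). -/
theorem perm_eq_comp_two_involutions {α : Type*} [Fintype α] [DecidableEq α]
    (σ : Equiv.Perm α) :
    ∃ a b : Equiv.Perm α, a * a = 1 ∧ b * b = 1 ∧ σ = a * b :=
  perm_eq_comp_two_involutions_general σ
end

section
/- Let D(n) denote the set of sizes reachable from n by repeatedly applying m ↦ ⌈m/2⌉ or m ↦ ⌊m/2⌋ until reaching a value ≤ 1. Then the cardinality of D(n) is at most 2·(⌈log₂ n⌉ + 1). -/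
/-- One halving step: from a size a > 1 we may go to ⌈a/2⌉ or ⌊a/2⌋. -/
def halveStep (a b : ℕ) : Prop :=
  1 < a ∧ (b = (a + 1) / 2 ∨ b = a / 2)

/-!
After `k` halvings of `n` the size lies between `⌊n / 2^k⌋` and `⌈n / 2^k⌉`, and the latter is at
most `⌊n / 2^k⌋ + 1`; so each depth contributes at most two sizes. A halving step needs a size
`≥ 2`, hence `⌈n / 2^k⌉ ≥ 2`, i.e. `2^k < n`, so only the depths `k ≤ ⌈log₂ n⌉` occur.
-/

lemma halveStep_bounds {q p b c : ℕ} (h : halveStep b c) (hq : q ≤ b) (hp : b ≤ p + 1) :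
    q / 2 ≤ c ∧ c ≤ p / 2 + 1 := by
  obtain ⟨-, hc | hc⟩ := h <;> omega

/-- `(n - 1) / 2 ^ k + 1` is `⌈n / 2^k⌉` for `n ≥ 1`; for `n = 0` it is `1`, still an upper bound. -/
lemma exists_le_clog_of_reflTransGen_halveStep {n m : ℕ}
    (h : Relation.ReflTransGen halveStep n m) :
    ∃ k ≤ Nat.clog 2 n, n / 2 ^ k ≤ m ∧ m ≤ (n - 1) / 2 ^ k + 1 := by
  induction h with
  | refl => exact ⟨0, Nat.zero_le _, by simp, by omega⟩
  | @tail b c _ hbc ih =>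
    obtain ⟨k, hk, hlo, hhi⟩ := ih
    have hpow : 2 ^ k < n := by
      have hquot : 0 < (n - 1) / 2 ^ k := by have := hbc.1; omega
      have := (Nat.div_pos_iff.mp hquot).2
      grind
    have hdiv (a : ℕ) : a / 2 ^ (k + 1) = a / 2 ^ k / 2 := by
      rw [pow_succ, Nat.div_div_eq_div_mul]
    refine ⟨k + 1, (Nat.lt_clog_iff_pow_lt one_lt_two).mpr hpow, ?_⟩
    rw [hdiv, hdiv]
    exact halveStep_bounds hbc hlo hhi

lemma reachable_subset_image (n : ℕ) :
    {m : ℕ | Relation.ReflTransGen halveStep n m} ⊆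
      ((Finset.range (Nat.clog 2 n + 1) ×ˢ Finset.range 2).image
        fun p => n / 2 ^ p.1 + p.2 : Finset ℕ) := by
  intro m hm
  obtain ⟨k, hk, hlo, hhi⟩ := exists_le_clog_of_reflTransGen_halveStep hm
  have hceil : (n - 1) / 2 ^ k ≤ n / 2 ^ k := Nat.div_le_div_right (Nat.sub_le n 1)
  simp only [Finset.coe_image, Set.mem_image, Finset.mem_coe, Finset.mem_product,
    Finset.mem_range, Prod.exists]
  exact ⟨k, m - n / 2 ^ k, ⟨by omega, by omega⟩, by omega⟩

/-- The set of sizes reachable from n by repeated halving has cardinality at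
most 2·(⌈log₂ n⌉ + 1). -/
theorem reachable_sizes_card_le (n : ℕ) :
    {m : ℕ | Relation.ReflTransGen halveStep n m}.ncard ≤
      2 * (Nat.clog 2 n + 1) := by
  calc {m : ℕ | Relation.ReflTransGen halveStep n m}.ncard
      ≤ ((Finset.range (Nat.clog 2 n + 1) ×ˢ Finset.range 2).image
          fun p => n / 2 ^ p.1 + p.2).card := by
        rw [← Set.ncard_coe_finset]
        exact Set.ncard_le_ncard (reachable_subset_image n) (Finset.finite_toSet _)
    _ ≤ (Finset.range (Nat.clog 2 n + 1) ×ˢ Finset.range 2).card := Finset.card_image_le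
    _ = 2 * (Nat.clog 2 n + 1) := by
        rw [Finset.card_product, Finset.card_range, Finset.card_range, mul_comm]
end

section
/- For each recursion level k ≥ 0, the set of sizes reachable from n by exactly k applications of m ↦ ⌈m/2⌉ or m ↦ ⌊m/2⌋ has cardinality at most 2; specifically, all such sizes lie in {⌊n/2^k⌋, ⌈n/2^k⌉}. -/
/-! Floor- and ceiling-halving are both squeezed between `⌊m/2⌋` and `⌈m/2⌉`, and
`⌊⌊n/a⌋/2⌋ = ⌊n/2a⌋`, `⌈⌈n/a⌉/2⌉ = ⌈n/2a⌉`. Hence after `k` steps, whatever the choices,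
the size lies in the interval `[⌊n/2^k⌋, ⌈n/2^k⌉]`, which has at most two elements. -/

namespace Nat

theorem ceilDiv_ceilDiv (b : ℕ) {a c : ℕ} (ha : 0 < a) (hc : 0 < c) :
    b ⌈/⌉ a ⌈/⌉ c = b ⌈/⌉ (a * c) :=
  eq_of_forall_ge_iff fun q => by
    rw [ceilDiv_le_iff_le_mul hc, ceilDiv_le_iff_le_mul ha,
      ceilDiv_le_iff_le_mul (Nat.mul_pos ha hc), Nat.mul_assoc]

theorem ceilDiv_le_div_add_one (n a : ℕ) : n ⌈/⌉ a ≤ n / a + 1 := by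
  rcases a.eq_zero_or_pos with rfl | ha
  · simp
  · calc n ⌈/⌉ a = (n + a - 1) / a := ceilDiv_eq_add_pred_div n a
      _ ≤ (n + a) / a := Nat.div_le_div_right (by omega)
      _ = n / a + 1 := Nat.add_div_right n ha

theorem eq_div_or_eq_ceilDiv_of_mem_Icc {n a m : ℕ} (hm : m ∈ Set.Icc (n / a) (n ⌈/⌉ a)) :
    m = n / a ∨ m = n ⌈/⌉ a := by
  have := ceilDiv_le_div_add_one n a
  obtain ⟨h₁, h₂⟩ := hm
  omega

theorem halve_mem_Icc_div_ceilDiv {n a m m' : ℕ} (ha : 0 < a)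
    (hm : m ∈ Set.Icc (n / a) (n ⌈/⌉ a)) (hm' : m' = (m + 1) / 2 ∨ m' = m / 2) :
    m' ∈ Set.Icc (n / (a * 2)) (n ⌈/⌉ (a * 2)) := by
  have hlo : m / 2 ≤ m' := by rcases hm' with rfl | rfl <;> omega
  have hhi : m' ≤ m ⌈/⌉ 2 := by
    rw [ceilDiv_eq_add_pred_div]; rcases hm' with rfl | rfl <;> omega
  constructor
  · calc n / (a * 2) = n / a / 2 := (Nat.div_div_eq_div_mul n a 2).symm
      _ ≤ m / 2 := Nat.div_le_div_right hm.1
      _ ≤ m' := hlo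
  · calc m' ≤ m ⌈/⌉ 2 := hhi
      _ ≤ n ⌈/⌉ a ⌈/⌉ 2 := (gc_mul_ceilDiv two_pos).monotone_l hm.2
      _ = n ⌈/⌉ (a * 2) := ceilDiv_ceilDiv n ha two_pos

theorem halving_chain_mem_Icc {n : ℕ} {seq : ℕ → ℕ} (h₀ : seq 0 = n) (k : ℕ)
    (hstep : ∀ i < k, seq (i + 1) = (seq i + 1) / 2 ∨ seq (i + 1) = seq i / 2) :
    seq k ∈ Set.Icc (n / 2 ^ k) (n ⌈/⌉ 2 ^ k) := by
  induction k with
  | zero => simp [h₀]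
  | succ k ih =>
    rw [Nat.pow_succ]
    exact halve_mem_Icc_div_ceilDiv (Nat.two_pow_pos k)
      (ih fun i hi => hstep i (by omega)) (hstep k k.lt_succ_self)

end Nat

/-- After exactly k halving steps (each taking the ceiling or the floor), the
reachable sizes from n all lie in {⌊n/2^k⌋, ⌈n/2^k⌉}; in particular there are
at most 2 of them. -/
theorem halving_level_sizes (n k : ℕ) :
    (∀ seq : ℕ → ℕ, seq 0 = n →
      (∀ i < k, seq (i + 1) = (seq i + 1) / 2 ∨ seq (i + 1) = seq i / 2) →
      seq k = n / 2 ^ k ∨ seq k = (n + 2 ^ k - 1) / 2 ^ k) ∧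
    {m : ℕ | ∃ seq : ℕ → ℕ, seq 0 = n ∧
      (∀ i < k, seq (i + 1) = (seq i + 1) / 2 ∨ seq (i + 1) = seq i / 2) ∧
      seq k = m}.ncard ≤ 2 := by
  have hchain : ∀ seq : ℕ → ℕ, seq 0 = n →
      (∀ i < k, seq (i + 1) = (seq i + 1) / 2 ∨ seq (i + 1) = seq i / 2) →
      seq k = n / 2 ^ k ∨ seq k = (n + 2 ^ k - 1) / 2 ^ k := fun seq h₀ hstep =>
    Nat.eq_div_or_eq_ceilDiv_of_mem_Icc (Nat.halving_chain_mem_Icc h₀ k hstep)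
  refine ⟨hchain, ?_⟩
  have hsub : {m : ℕ | ∃ seq : ℕ → ℕ, seq 0 = n ∧
      (∀ i < k, seq (i + 1) = (seq i + 1) / 2 ∨ seq (i + 1) = seq i / 2) ∧
      seq k = m} ⊆ {n / 2 ^ k, (n + 2 ^ k - 1) / 2 ^ k} := by
    rintro m ⟨seq, h₀, hstep, rfl⟩
    exact hchain seq h₀ hstep
  calc _ ≤ ({n / 2 ^ k, (n + 2 ^ k - 1) / 2 ^ k} : Set ℕ).ncard :=
        Set.ncard_le_ncard hsub (Set.toFinite _)
    _ ≤ 2 := (Set.ncard_insert_le _ _).trans (by simp)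
end
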